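/- arXiv:2404.05149 — 4 statements merged into one kernel-verified Lean document; each statement's English description precedes it below -/
import Mathlib

section
/- Let θ, a_i, a_j ∈ ℂ^N, let G_i and G_j be N × M complex matrices, and let x ∈ ℂ^M. Set Θ = diag(θ) (the N × N diagonal matrix with diagonal θ), Q = θθᴴ (the N × N matrix with entries Q(m,n) = θ(m)·conj(θ(n))), A_{ij} = (conj(G_j)·G_iᵀ) ⊙ (a_i a_jᴴ)ᵀ and B_{ij} = (conj(a_j)·a_iᵀ) ⊙ (G_i x xᴴ G_jᴴ)ᵀ, where ⊙ denotes the entrywise (Hadamard) product and conj(·) entrywise conjugation. Then tr(Qᴴ·A_{ij}·Q·B_{ij}) = (a_iᵀΘG_i x)·conj(a_jᵀΘG_j x)·(a_jᴴΘᴴ·conj(G_j)·G_iᵀ·Θ·a_i). -/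
open Matrix

/-- the trace identity
`tr(Qᴴ·A_{ij}·Q·B_{ij}) = (a_iᵀΘG_i x)·conj(a_jᵀΘG_j x)·(a_jᴴΘᴴ·conj(G_j)·G_iᵀ·Θ·a_i)`
with `Θ = diag(θ)`, `Q = θθᴴ`, `A_{ij} = (conj(G_j)G_iᵀ) ⊙ (a_i a_jᴴ)ᵀ`,
`B_{ij} = (conj(a_j)a_iᵀ) ⊙ (G_i x xᴴ G_jᴴ)ᵀ`. -/
theorem stmt_9 (N M : ℕ) (θ ai aj : Fin N → ℂ)
    (Gi Gj : Matrix (Fin N) (Fin M) ℂ) (x : Fin M → ℂ) :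
    Matrix.trace
      ((Matrix.vecMulVec θ (star θ)).conjTranspose *
        Matrix.hadamard ((Gj.map (starRingEnd ℂ)) * Gi.transpose)
          (Matrix.vecMulVec ai (star aj)).transpose *
        Matrix.vecMulVec θ (star θ) *
        Matrix.hadamard (Matrix.vecMulVec (star aj) ai)
          (Matrix.vecMulVec (Gi *ᵥ x) (star (Gj *ᵥ x))).transpose) =
      (ai ⬝ᵥ ((Matrix.diagonal θ * Gi) *ᵥ x)) *
        star (aj ⬝ᵥ ((Matrix.diagonal θ * Gj) *ᵥ x)) *
        (star aj ⬝ᵥ (((Matrix.diagonal θ).conjTranspose * (Gj.map (starRingEnd ℂ)) *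
          Gi.transpose * Matrix.diagonal θ) *ᵥ ai)) := by
  classical
  set A := Matrix.hadamard ((Gj.map (starRingEnd ℂ)) * Gi.transpose)
          (Matrix.vecMulVec ai (star aj)).transpose with hA
  set B := Matrix.hadamard (Matrix.vecMulVec (star aj) ai)
          (Matrix.vecMulVec (Gi *ᵥ x) (star (Gj *ᵥ x))).transpose with hB
  have hQ : (Matrix.vecMulVec θ (star θ)).conjTranspose = Matrix.vecMulVec θ (star θ) := by
    ext m n; simp [vecMulVec_apply, mul_comm]
  rw [hQ]
  have hmid : Matrix.vecMulVec θ (star θ) * A * Matrix.vecMulVec θ (star θ)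
      = (star θ ⬝ᵥ (A *ᵥ θ)) • Matrix.vecMulVec θ (star θ) := by
    ext m q
    simp only [mul_apply, vecMulVec_apply, dotProduct, mulVec, Matrix.smul_apply, smul_eq_mul,
      Finset.sum_mul, Finset.mul_sum, Pi.star_apply]
    rw [Finset.sum_comm]
    exact Finset.sum_congr rfl fun p _ => Finset.sum_congr rfl fun n _ => by ring
  rw [hmid, Matrix.smul_mul, trace_smul, smul_eq_mul]
  have htr : Matrix.trace (Matrix.vecMulVec θ (star θ) * B) = star θ ⬝ᵥ (B *ᵥ θ) := by
    simp only [trace, diag_apply, mul_apply, vecMulVec_apply, dotProduct, mulVec,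
      Pi.star_apply, Finset.mul_sum]
    rw [Finset.sum_comm]
    exact Finset.sum_congr rfl fun q _ => Finset.sum_congr rfl fun m _ => by ring
  rw [htr]
  have h3 : star θ ⬝ᵥ (A *ᵥ θ)
      = star aj ⬝ᵥ (((Matrix.diagonal θ).conjTranspose * (Gj.map (starRingEnd ℂ)) *
          Gi.transpose * Matrix.diagonal θ) *ᵥ ai) := by
    simp only [hA, dotProduct, mulVec, hadamard_apply, mul_apply, vecMulVec_apply,
      transpose_apply, map_apply, Pi.star_apply, diagonal_conjTranspose,
      diagonal_apply, Pi.star_def, Finset.mul_sum, Finset.sum_mul,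
      mul_ite, ite_mul, mul_zero, zero_mul, Finset.sum_ite_eq, Finset.sum_ite_eq',
      Finset.mem_univ, if_true]
    refine Finset.sum_congr rfl fun n _ => Finset.sum_congr rfl fun p _ => ?_
    exact Finset.sum_congr rfl fun r _ => by ring
  have h2 : star θ ⬝ᵥ (B *ᵥ θ)
      = (ai ⬝ᵥ ((Matrix.diagonal θ * Gi) *ᵥ x)) *
        star (aj ⬝ᵥ ((Matrix.diagonal θ * Gj) *ᵥ x)) := by
    simp only [hB, dotProduct, mulVec, hadamard_apply, vecMulVec_apply,
      transpose_apply, Pi.star_apply, diagonal_mul, mul_apply, diagonal_apply,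
      star_sum, star_mul', mul_ite, ite_mul, mul_zero, zero_mul,
      Finset.sum_ite_eq, Finset.sum_ite_eq', Finset.mem_univ, if_true,
      Finset.mul_sum, Finset.sum_mul, RCLike.star_def]
    refine Finset.sum_congr rfl fun q _ => ?_
    rw [Finset.sum_comm]
    exact Finset.sum_congr rfl fun l _ => Finset.sum_congr rfl fun m _ =>
      Finset.sum_congr rfl fun k _ => by ring
  rw [h3, h2]; ring
end

section
/- Let θ, a_i, a_j ∈ ℂ^N, let G_i and G_j be N × M complex matrices, let x ∈ ℂ^M, let α_i, α_j ∈ ℂ, and let L be a positive integer. Set Θ = diag(θ), Q = θθᴴ, and for indices p, q ∈ {i, j} define A_{pq} = (conj(G_q)·G_pᵀ) ⊙ (a_p a_qᴴ)ᵀ and B_{pq} = (conj(a_q)·a_pᵀ) ⊙ (G_p x xᴴ G_qᴴ)ᵀ, where ⊙ is the Hadamard product. Let X = x·1_Lᵀ be the M × L matrix whose L columns all equal x. Then ‖α_i·G_iᵀΘ a_i a_iᵀΘ G_i X − α_j·G_jᵀΘ a_j a_jᵀΘ G_j X‖_F² = L·( |α_i|²·tr(QᴴA_{ii}QB_{ii})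 − 2·Re( α_i·conj(α_j)·tr(QᴴA_{ij}QB_{ij}) ) + |α_j|²·tr(QᴴA_{jj}QB_{jj}) ), where ‖·‖_F denotes the Frobenius norm. -/
open Matrix

theorem key_trace (n : Type*) [Fintype n] (θ : n → ℂ) (A B : Matrix n n ℂ) :
    Matrix.trace ((Matrix.vecMulVec θ (star θ)).conjTranspose * A * (Matrix.vecMulVec θ (star θ)) * B)
    = ((star θ) ⬝ᵥ (A *ᵥ θ)) * ((star θ) ⬝ᵥ (B *ᵥ θ)) := by
  simp only [Matrix.trace, Matrix.diag, Matrix.mul_apply, Matrix.vecMulVec_apply,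
    Matrix.conjTranspose_apply, dotProduct, Matrix.mulVec, Pi.star_apply,
    star_mul', star_star, Finset.mul_sum, Finset.sum_mul]
  rw [Finset.sum_comm]
  refine Finset.sum_congr rfl fun x1 _ => ?_
  refine Finset.sum_congr rfl fun x _ => ?_
  rw [Finset.sum_comm]
  refine Finset.sum_congr rfl fun i _ => ?_
  refine Finset.sum_congr rfl fun x2 _ => ?_
  ring

theorem lemA (N M : ℕ) (θ ap aq : Fin N → ℂ) (Gp Gq : Matrix (Fin N) (Fin M) ℂ) :
    (star θ) ⬝ᵥ ((Matrix.hadamard ((Gq.map (starRingEnd ℂ)) * Gp.transpose)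
        (Matrix.vecMulVec ap (star aq)).transpose) *ᵥ θ)
    = ∑ u : Fin M, (∑ l, θ l * ap l * Gp l u) * star (∑ k, θ k * aq k * Gq k u) := by
  simp only [dotProduct, Matrix.mulVec, Matrix.hadamard_apply, Matrix.mul_apply,
    Matrix.transpose_apply, Matrix.vecMulVec_apply, Matrix.map_apply, Pi.star_apply,
    star_sum, star_mul', star_star, Finset.mul_sum, Finset.sum_mul]
  refine Eq.trans (Finset.sum_congr rfl fun a _ => Finset.sum_comm ..) ?_
  rw [Finset.sum_comm]
  refine Finset.sum_congr rfl fun m _ => ?_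
  refine Finset.sum_congr rfl fun a _ => ?_
  refine Finset.sum_congr rfl fun b _ => ?_
  simp only [starRingEnd_apply]
  ring

theorem lemB (N M : ℕ) (θ ap aq : Fin N → ℂ) (Gp Gq : Matrix (Fin N) (Fin M) ℂ) (x : Fin M → ℂ) :
    (star θ) ⬝ᵥ ((Matrix.hadamard (Matrix.vecMulVec (star aq) ap)
        (Matrix.vecMulVec (Gp *ᵥ x) (star (Gq *ᵥ x))).transpose) *ᵥ θ)
    = (∑ n, θ n * ap n * (Gp *ᵥ x) n) * star (∑ m, θ m * aq m * (Gq *ᵥ x) m) := by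
  simp only [dotProduct, Matrix.hadamard_apply, Matrix.mulVec,
    Matrix.transpose_apply, Matrix.vecMulVec_apply, Pi.star_apply,
    star_sum, star_mul', star_star, Finset.mul_sum, Finset.sum_mul]
  refine Eq.trans (Finset.sum_congr rfl fun a _ => Finset.sum_comm ..) ?_
  refine Finset.sum_congr rfl fun a _ => ?_
  refine Finset.sum_congr rfl fun b _ => ?_
  refine Finset.sum_congr rfl fun c _ => ?_
  refine Finset.sum_congr rfl fun d _ => ?_
  ring

theorem lemY (N M L : ℕ) (θ a : Fin N → ℂ) (G : Matrix (Fin N) (Fin M) ℂ) (x : Fin M → ℂ)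
    (p : Fin M) (l : Fin L) :
    (G.transpose * Matrix.diagonal θ * Matrix.vecMulVec a a * Matrix.diagonal θ * G *
      (Matrix.of fun p (_ : Fin L) => x p)) p l
    = (∑ n, θ n * a n * G n p) * (∑ n, θ n * a n * (G *ᵥ x) n) := by
  simp only [Matrix.mul_apply, Matrix.diagonal_apply, Matrix.transpose_apply,
    Matrix.vecMulVec_apply, Matrix.of_apply, Matrix.mulVec, dotProduct,
    mul_ite, ite_mul, mul_zero, zero_mul, Finset.sum_ite_eq, Finset.sum_ite_eq',
    Finset.mem_univ, if_true, Finset.mul_sum, Finset.sum_mul]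
  rw [Finset.sum_comm]
  refine Finset.sum_congr rfl fun a _ => ?_
  refine Finset.sum_congr rfl fun b _ => ?_
  refine Finset.sum_congr rfl fun c _ => ?_
  ring

theorem main_sum (M : ℕ) (F G : Fin M → ℂ) (ci cj αi αj : ℂ) :
    ∑ p, (αi * (F p * ci) - αj * (G p * cj)) * star (αi * (F p * ci) - αj * (G p * cj))
    = αi * star αi * ((∑ p, F p * star (F p)) * (ci * star ci))
      - ((αi * star αj * ((∑ p, F p * star (G p)) * (ci * star cj)))
         + star (αi * star αj * ((∑ p, F p * star (G p)) * (ci * star cj))))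
      + αj * star αj * ((∑ p, G p * star (G p)) * (cj * star cj)) := by
  simp only [star_sub, star_mul', star_star, star_sum, Finset.mul_sum, Finset.sum_mul]
  rw [← Finset.sum_add_distrib, ← Finset.sum_sub_distrib, ← Finset.sum_add_distrib]
  refine Finset.sum_congr rfl fun p _ => ?_
  ring

/-- Proposition 3: with `Θ = diag(θ)`, `Q = θθᴴ`,
`A_{pq} = (conj(G_q)G_pᵀ) ⊙ (a_p a_qᴴ)ᵀ`, `B_{pq} = (conj(a_q)a_pᵀ) ⊙ (G_p x xᴴ G_qᴴ)ᵀ`,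
and `X = x·1_Lᵀ`, the squared Frobenius norm
`‖α_i G_iᵀΘa_i a_iᵀΘG_i X − α_j G_jᵀΘa_j a_jᵀΘG_j X‖_F²` equals
`L·(|α_i|²·tr(QᴴA_{ii}QB_{ii}) − 2Re(α_i conj(α_j) tr(QᴴA_{ij}QB_{ij})) + |α_j|²·tr(QᴴA_{jj}QB_{jj}))`. -/
theorem stmt_10 (N M L : ℕ) (hL : 0 < L)
    (θ ai aj : Fin N → ℂ) (Gi Gj : Matrix (Fin N) (Fin M) ℂ)
    (x : Fin M → ℂ) (αi αj : ℂ)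
    (Θ : Matrix (Fin N) (Fin N) ℂ) (hΘ : Θ = Matrix.diagonal θ)
    (Q : Matrix (Fin N) (Fin N) ℂ) (hQ : Q = Matrix.vecMulVec θ (star θ))
    (A B : Matrix (Fin N) (Fin M) ℂ → Matrix (Fin N) (Fin M) ℂ →
      (Fin N → ℂ) → (Fin N → ℂ) → Matrix (Fin N) (Fin N) ℂ)
    (hA : ∀ Gp Gq ap aq, A Gp Gq ap aq =
      Matrix.hadamard ((Gq.map (starRingEnd ℂ)) * Gp.transpose)
        (Matrix.vecMulVec ap (star aq)).transpose)
    (hB : ∀ Gp Gq ap aq, B Gp Gq ap aq =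
      Matrix.hadamard (Matrix.vecMulVec (star aq) ap)
        (Matrix.vecMulVec (Gp *ᵥ x) (star (Gq *ᵥ x))).transpose)
    (X : Matrix (Fin M) (Fin L) ℂ) (hX : X = Matrix.of fun p _ => x p) :
    ((∑ p : Fin M, ∑ l : Fin L,
        ‖(αi • (Gi.transpose * Θ * Matrix.vecMulVec ai ai * Θ * Gi * X) -
          αj • (Gj.transpose * Θ * Matrix.vecMulVec aj aj * Θ * Gj * X)) p l‖ ^ 2 : ℝ) : ℂ) =
      (L : ℂ) *
        (((‖αi‖ : ℂ) ^ 2) * Matrix.trace (Q.conjTranspose * A Gi Gi ai ai * Q * B Gi Gi ai ai) -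
          2 * (((αi * star αj *
            Matrix.trace (Q.conjTranspose * A Gi Gj ai aj * Q * B Gi Gj ai aj)).re : ℝ) : ℂ) +
          ((‖αj‖ : ℂ) ^ 2) * Matrix.trace (Q.conjTranspose * A Gj Gj aj aj * Q * B Gj Gj aj aj)) := by
  have hnorm : ∀ z : ℂ, ((‖z‖ ^ 2 : ℝ) : ℂ) = z * star z := fun z => by
    rw [Complex.sq_norm, ← Complex.mul_conj, starRingEnd_apply]
  have habs : ∀ α : ℂ, ((‖α‖ : ℂ)) ^ 2 = α * star α := fun α => by
    rw [← Complex.ofReal_pow, hnorm]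
  have h2 : ∀ z : ℂ, 2 * ((z.re : ℝ) : ℂ) = z + star z := fun z => by
    apply Complex.ext <;> simp [two_mul]
  subst hΘ hQ hX
  simp only [hA, hB, key_trace, lemA, lemB, habs, h2]
  simp only [Matrix.sub_apply, Matrix.smul_apply, smul_eq_mul, lemY]
  push_cast [hnorm]
  simp only [Finset.sum_const, Finset.card_univ, Fintype.card_fin, nsmul_eq_mul]
  rw [← Finset.mul_sum, main_sum]
end

section
/- Let θ, a_i, a_j ∈ ℂ^N, let G_i and G_j be N × M complex matrices, and let x ∈ ℂ^M. Set Θ = diag(θ), Q = θθᴴ, A_{ij} = (conj(G_j)·G_iᵀ) ⊙ (a_i a_jᴴ)ᵀ and B_{ij} = (conj(a_j)·a_iᵀ) ⊙ (G_i x xᴴ G_jᴴ)ᵀ, where ⊙ is the Hadamard product. Define Ψ_{ij} = G_jᴴ·( (Qᵀ·A_{ij}ᵀ·conj(Q)) ⊙ (conj(a_j)·a_iᵀ) )·G_i, an M × M matrix. Then tr(Qᴴ·A_{ij}·Q·B_{ij}) = xᴴ·Ψ_{ij}·x. -/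
/-! With `X = QᴴAQ`, the Hadamard factor moves across the trace,
`tr(X(C ⊙ Dᵀ)) = tr((Xᵀ ⊙ C)D)`, and for the rank-one `D = (G_i x)(G_j x)ᴴ` the trace `tr(YD)`
is the quadratic form `(G_j x)ᴴ Y (G_i x) = xᴴ (G_jᴴ Y G_i) x`. -/

open Matrix

namespace Matrix

variable {m n R : Type*} [Fintype n]

theorem trace_mul_hadamard_transpose [CommSemiring R] (X C D : Matrix n n R) :
    trace (X * (C ⊙ Dᵀ)) = trace ((Xᵀ ⊙ C) * D) := by
  simp only [trace, diag, mul_apply, hadamard_apply, transpose_apply]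
  rw [Finset.sum_comm]
  refine Finset.sum_congr rfl fun i _ => Finset.sum_congr rfl fun j _ => ?_
  ring

theorem trace_mul_vecMulVec [CommSemiring R] (Y : Matrix n n R) (p q : n → R) :
    trace (Y * vecMulVec p q) = q ⬝ᵥ (Y *ᵥ p) := by
  rw [mul_vecMulVec, trace_vecMulVec, dotProduct_comm]

theorem star_mulVec_dotProduct_mulVec_mulVec [Fintype m] [CommSemiring R] [StarRing R]
    (G H : Matrix n m R) (Y : Matrix n n R) (x : m → R) :
    star (H *ᵥ x) ⬝ᵥ (Y *ᵥ (G *ᵥ x)) = star x ⬝ᵥ ((Hᴴ * Y * G) *ᵥ x) := by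
  rw [star_mulVec, ← dotProduct_mulVec, mulVec_mulVec, mulVec_mulVec]

theorem transpose_conjTranspose_mul_mul [CommSemiring R] [StarRing R] (Q A : Matrix n n R) :
    (Qᴴ * A * Q)ᵀ = Qᵀ * Aᵀ * Q.map star := by
  rw [transpose_mul, transpose_mul, conjTranspose_transpose, Matrix.mul_assoc]

end Matrix

theorem stmt_11_general (N M : ℕ) (ai aj : Fin N → ℂ)
    (Gi Gj : Matrix (Fin N) (Fin M) ℂ) (x : Fin M → ℂ)
    (Q : Matrix (Fin N) (Fin N) ℂ)
    (A : Matrix (Fin N) (Fin N) ℂ)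
    (B : Matrix (Fin N) (Fin N) ℂ)
    (hB : B = Matrix.hadamard (Matrix.vecMulVec (star aj) ai)
      (Matrix.vecMulVec (Gi *ᵥ x) (star (Gj *ᵥ x))).transpose)
    (Ψ : Matrix (Fin M) (Fin M) ℂ)
    (hΨ : Ψ = Gj.conjTranspose *
      Matrix.hadamard (Q.transpose * A.transpose * Q.map (starRingEnd ℂ))
        (Matrix.vecMulVec (star aj) ai) * Gi) :
    Matrix.trace (Q.conjTranspose * A * Q * B) = star x ⬝ᵥ (Ψ *ᵥ x) := by
  rw [hB, hΨ, trace_mul_hadamard_transpose, trace_mul_vecMulVec, transpose_conjTranspose_mul_mul]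
  exact star_mulVec_dotProduct_mulVec_mulVec Gi Gj _ x

/-- with `Θ = diag(θ)`, `Q = θθᴴ`,
`A_{ij} = (conj(G_j)G_iᵀ) ⊙ (a_i a_jᴴ)ᵀ`, `B_{ij} = (conj(a_j)a_iᵀ) ⊙ (G_i x xᴴ G_jᴴ)ᵀ`,
and `Ψ_{ij} = G_jᴴ·((QᵀA_{ij}ᵀ conj(Q)) ⊙ (conj(a_j)a_iᵀ))·G_i`, one has
`tr(Qᴴ·A_{ij}·Q·B_{ij}) = xᴴ·Ψ_{ij}·x`. -/
theorem stmt_11 (N M : ℕ) (θ ai aj : Fin N → ℂ)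
    (Gi Gj : Matrix (Fin N) (Fin M) ℂ) (x : Fin M → ℂ)
    (Q : Matrix (Fin N) (Fin N) ℂ) (hQ : Q = Matrix.vecMulVec θ (star θ))
    (A : Matrix (Fin N) (Fin N) ℂ)
    (hA : A = Matrix.hadamard ((Gj.map (starRingEnd ℂ)) * Gi.transpose)
      (Matrix.vecMulVec ai (star aj)).transpose)
    (B : Matrix (Fin N) (Fin N) ℂ)
    (hB : B = Matrix.hadamard (Matrix.vecMulVec (star aj) ai)
      (Matrix.vecMulVec (Gi *ᵥ x) (star (Gj *ᵥ x))).transpose)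
    (Ψ : Matrix (Fin M) (Fin M) ℂ)
    (hΨ : Ψ = Gj.conjTranspose *
      Matrix.hadamard (Q.transpose * A.transpose * Q.map (starRingEnd ℂ))
        (Matrix.vecMulVec (star aj) ai) * Gi) :
    Matrix.trace (Q.conjTranspose * A * Q * B) = star x ⬝ᵥ (Ψ *ᵥ x) :=
  stmt_11_general N M ai aj Gi Gj x Q A B hB Ψ hΨ
end

section
/- Let θ ∈ ℂ^N with |θ(n)| = 1 for every n, and let Q be an N × N complex matrix with |Q(i,j)| = 1 for every i, j. Then Q = θθᴴ (i.e., Q(i,j) = θ(i)·conj(θ(j)) for all i, j) if and only if Re(θᴴQθ) ≥ N². -/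
open Matrix

lemma aux_conj_mul (z : ℂ) (hz : ‖z‖ = 1) : (starRingEnd ℂ) z * z = 1 := by
  rw [mul_comm, Complex.mul_conj]
  norm_cast
  simp [Complex.normSq_eq_norm_sq, hz]

lemma aux_re_eq_one (z : ℂ) (hz : ‖z‖ = 1) (hre : z.re = 1) : z = 1 := by
  have h2 : z.re ^ 2 + z.im ^ 2 = 1 := by
    have := Complex.sq_norm z
    rw [hz] at this
    nlinarith [this, Complex.normSq_apply z]
  have him : z.im = 0 := by nlinarith
  exact Complex.ext (by simp [hre]) (by simp [him])

/-- for a unit-modulus vector `θ ∈ ℂ^N` and a matrix `Q` with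
unit-modulus entries, `Q = θθᴴ` iff `Re(θᴴQθ) ≥ N²`. -/
theorem stmt_15 (N : ℕ) (θ : Fin N → ℂ) (hθ : ∀ n, ‖θ n‖ = 1)
    (Q : Matrix (Fin N) (Fin N) ℂ) (hQ : ∀ i j, ‖Q i j‖ = 1) :
    Q = Matrix.vecMulVec θ (star θ) ↔ (N : ℝ) ^ 2 ≤ (star θ ⬝ᵥ (Q *ᵥ θ)).re := by
  have hexp : star θ ⬝ᵥ (Q *ᵥ θ) = ∑ i, ∑ j, (starRingEnd ℂ) (θ i) * Q i j * θ j := by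
    simp [dotProduct, mulVec, Finset.mul_sum, mul_assoc, Pi.star_apply]
  have hstar : ∀ j, star (θ j) = (starRingEnd ℂ) (θ j) := fun j => rfl
  constructor
  · intro hQθ
    subst hQθ
    have key : ∀ i j, (starRingEnd ℂ) (θ i) * vecMulVec θ (star θ) i j * θ j = 1 := by
      intro i j
      have h1 := aux_conj_mul (θ i) (hθ i)
      have h2 := aux_conj_mul (θ j) (hθ j)
      simp only [vecMulVec_apply, Pi.star_apply, hstar]
      calc (starRingEnd ℂ) (θ i) * (θ i * (starRingEnd ℂ) (θ j)) * θ j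
          = ((starRingEnd ℂ) (θ i) * θ i) * ((starRingEnd ℂ) (θ j) * θ j) := by ring
        _ = 1 := by rw [h1, h2]; ring
    rw [hexp]
    simp only [key, Finset.sum_const, Finset.card_univ, Fintype.card_fin, nsmul_eq_mul,
      mul_one]
    simp [sq]
  · intro hge
    rw [hexp] at hge
    have hre : (∑ i, ∑ j, (starRingEnd ℂ) (θ i) * Q i j * θ j).re
        = ∑ i, ∑ j, ((starRingEnd ℂ) (θ i) * Q i j * θ j).re := by
      simp [Complex.re_sum]
    rw [hre] at hge
    have hnorm : ∀ i j, ‖(starRingEnd ℂ) (θ i) * Q i j * θ j‖ = 1 := by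
      intro i j
      simp [hθ, hQ]
    have hle1 : ∀ i j, ((starRingEnd ℂ) (θ i) * Q i j * θ j).re ≤ 1 := by
      intro i j
      calc ((starRingEnd ℂ) (θ i) * Q i j * θ j).re
          ≤ ‖(starRingEnd ℂ) (θ i) * Q i j * θ j‖ := Complex.re_le_norm _
        _ = 1 := hnorm i j
    -- each term must equal 1
    have hsum_le : ∀ i, ∑ j, ((starRingEnd ℂ) (θ i) * Q i j * θ j).re ≤ (N : ℝ) := by
      intro i
      calc ∑ j, ((starRingEnd ℂ) (θ i) * Q i j * θ j).re ≤ ∑ _j : Fin N, (1 : ℝ) :=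
            Finset.sum_le_sum fun j _ => hle1 i j
        _ = N := by simp
    have hterm : ∀ i j, ((starRingEnd ℂ) (θ i) * Q i j * θ j).re = 1 := by
      by_contra h
      push_neg at h
      obtain ⟨i, j, hij⟩ := h
      have hlt : ((starRingEnd ℂ) (θ i) * Q i j * θ j).re < 1 := lt_of_le_of_ne (hle1 i j) hij
      have h1 : ∑ j', ((starRingEnd ℂ) (θ i) * Q i j' * θ j').re < (N : ℝ) := by
        calc ∑ j', ((starRingEnd ℂ) (θ i) * Q i j' * θ j').re
            < ∑ _j : Fin N, (1 : ℝ) := by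
              apply Finset.sum_lt_sum (fun j' _ => hle1 i j') ⟨j, Finset.mem_univ j, hlt⟩
          _ = N := by simp
      have h2 : ∑ i', ∑ j', ((starRingEnd ℂ) (θ i') * Q i' j' * θ j').re < (N : ℝ) ^ 2 := by
        calc ∑ i', ∑ j', ((starRingEnd ℂ) (θ i') * Q i' j' * θ j').re
            < ∑ _i : Fin N, (N : ℝ) :=
              Finset.sum_lt_sum (fun i' _ => hsum_le i') ⟨i, Finset.mem_univ i, h1⟩
          _ = (N : ℝ) ^ 2 := by simp [sq]
      linarith
    have heq1 : ∀ i j, (starRingEnd ℂ) (θ i) * Q i j * θ j = 1 := fun i j =>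
      aux_re_eq_one _ (hnorm i j) (hterm i j)
    ext i j
    have h1 := aux_conj_mul (θ i) (hθ i)
    have h2 := aux_conj_mul (θ j) (hθ j)
    have := heq1 i j
    have : θ i * ((starRingEnd ℂ) (θ i) * Q i j * θ j) * (starRingEnd ℂ) (θ j)
        = θ i * 1 * (starRingEnd ℂ) (θ j) := by rw [this]
    simp only [vecMulVec_apply, Pi.star_apply, hstar]
    calc Q i j = ((starRingEnd ℂ) (θ i) * θ i) * Q i j * ((starRingEnd ℂ) (θ j) * θ j) := by
          rw [h1, h2]; ring
      _ = θ i * ((starRingEnd ℂ) (θ i) * Q i j * θ j) * (starRingEnd ℂ) (θ j) := by ring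
      _ = θ i * (starRingEnd ℂ) (θ j) := by rw [heq1 i j]; ring
end
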